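/- arXiv:2509.08543 — 3 statements merged into one kernel-verified Lean document; each statement's English description precedes it below -/
import Mathlib

section
/- Define I(ε) = ∫_0^ε (ln(-ln x) - ln(ln 2))^2 dx for ε ∈ (0, 1/e). Then (1/(4ε))·I(ε) → ∞ as ε → 0+; in fact for ε sufficiently small, √((1/(4ε))·I(ε)) ≥ (1/(2√2))·ln(-ln ε). -/
open Real MeasureTheory Set Filter

noncomputable def F (x : ℝ) : ℝ := (Real.log (-Real.log x) - Real.log (Real.log 2)) ^ 2

lemma F_meas : Measurable F := by
  unfold F
  exact ((Real.measurable_log.comp Real.measurable_log.neg).sub measurable_const).pow_const 2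

lemma integrableF : IntegrableOn F (Ioo 0 (Real.exp (-1))) := by
  have hg : IntegrableOn (fun x : ℝ => 32 * x ^ (-(1:ℝ)/2) + 2 * (Real.log (Real.log 2))^2)
      (Ioo 0 (Real.exp (-1))) := by
    apply Integrable.add _ (integrableOn_const measure_Ioo_lt_top.ne)
    apply Integrable.const_mul
    have := (intervalIntegral.intervalIntegrable_rpow' (a := 0) (b := Real.exp (-1))
      (r := -(1:ℝ)/2) (by norm_num))
    rw [intervalIntegrable_iff_integrableOn_Ioc_of_le (Real.exp_pos _).le] at this
    exact this.mono_set Ioo_subset_Ioc_self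
  refine Integrable.mono' hg F_meas.aestronglyMeasurable ?_
  filter_upwards [ae_restrict_mem measurableSet_Ioo] with x hx
  obtain ⟨hx0, hx1⟩ := hx
  have hlx : Real.log x < -1 := by
    have := Real.log_lt_log hx0 hx1
    rwa [Real.log_exp] at this
  have hnl : (1:ℝ) < -Real.log x := by linarith
  have h1 : Real.log (-Real.log x) ≤ -Real.log x := by
    have := Real.log_le_sub_one_of_pos (by linarith : (0:ℝ) < -Real.log x)
    linarith
  have h0 : 0 ≤ Real.log (-Real.log x) := Real.log_nonneg hnl.le
  have hc : Real.log (Real.log 2) < 0 := by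
    apply Real.log_neg (Real.log_pos one_lt_two)
    have := Real.log_two_lt_d9; linarith
  set c := Real.log (Real.log 2)
  have hF : F x = (Real.log (-Real.log x) - c)^2 := rfl
  have hb : (Real.log (-Real.log x) - c)^2 ≤ 2 * (-Real.log x)^2 + 2 * c^2 := by
    nlinarith [sq_nonneg (Real.log (-Real.log x) + c), sq_nonneg (-Real.log x - Real.log (-Real.log x))]
  have hr : (-Real.log x)^2 ≤ 16 * x ^ (-(1:ℝ)/2) := by
    have h4 : -Real.log x ≤ 4 * x ^ (-(1:ℝ)/4) := by
      have := Real.log_le_sub_one_of_pos (Real.rpow_pos_of_pos hx0 (-(1:ℝ)/4))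
      rw [Real.log_rpow hx0] at this
      nlinarith [Real.rpow_pos_of_pos hx0 (-(1:ℝ)/4)]
    have hsq : (4 * x ^ (-(1:ℝ)/4))^2 = 16 * x ^ (-(1:ℝ)/2) := by
      rw [mul_pow, ← Real.rpow_natCast (x ^ (-(1:ℝ)/4)) 2, ← Real.rpow_mul hx0.le]
      norm_num
    calc (-Real.log x)^2 ≤ (4 * x ^ (-(1:ℝ)/4))^2 := by
          apply sq_le_sq' _ h4; nlinarith [Real.rpow_pos_of_pos hx0 (-(1:ℝ)/4)]
      _ = 16 * x ^ (-(1:ℝ)/2) := hsq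
  have : F x ≤ 32 * x ^ (-(1:ℝ)/2) + 2 * c^2 := by rw [hF]; nlinarith
  calc ‖F x‖ = F x := by rw [Real.norm_eq_abs, abs_of_nonneg (sq_nonneg _)]
    _ ≤ _ := this

lemma key {ε : ℝ} (h0 : 0 < ε) (h1 : ε ≤ Real.exp (-1)) :
    (1/4) * (Real.log (-Real.log ε))^2 ≤ (1 / (4 * ε)) * ∫ x in Ioo (0:ℝ) ε, F x := by
  have hint : IntegrableOn F (Ioo 0 ε) :=
    integrableF.mono_set (Ioo_subset_Ioo_right h1)
  have hlε : Real.log ε ≤ -1 := by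
    have := Real.log_le_log h0 h1
    rwa [Real.log_exp] at this
  have hLε : 0 ≤ Real.log (-Real.log ε) := Real.log_nonneg (by linarith)
  have hc : Real.log (Real.log 2) < 0 := by
    apply Real.log_neg (Real.log_pos one_lt_two)
    have := Real.log_two_lt_d9; linarith
  have hmono : ∫ x in Ioo (0:ℝ) ε, (Real.log (-Real.log ε))^2 ≤ ∫ x in Ioo (0:ℝ) ε, F x := by
    apply setIntegral_mono_on (integrableOn_const measure_Ioo_lt_top.ne) hint
      measurableSet_Ioo
    intro x hx
    obtain ⟨hx0, hxε⟩ := hx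
    have hlog : Real.log (-Real.log ε) ≤ Real.log (-Real.log x) := by
      apply Real.log_le_log (by linarith)
      have := Real.log_le_log hx0 hxε.le
      linarith
    have hx0' : 0 ≤ Real.log (-Real.log x) - Real.log (Real.log 2) := by linarith
    show (Real.log (-Real.log ε))^2 ≤ (Real.log (-Real.log x) - Real.log (Real.log 2))^2
    nlinarith
  rw [setIntegral_const] at hmono
  rw [measureReal_def, Real.volume_Ioo, sub_zero] at hmono
  rw [ENNReal.toReal_ofReal h0.le, smul_eq_mul] at hmono
  have h4ε : 0 < 4 * ε := by linarith
  have : (1 / (4 * ε)) * (ε * (Real.log (-Real.log ε))^2) = (1/4) * (Real.log (-Real.log ε))^2 := by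
    field_simp
  calc (1/4) * (Real.log (-Real.log ε))^2 = (1 / (4*ε)) * (ε * (Real.log (-Real.log ε))^2) := this.symm
    _ ≤ (1 / (4*ε)) * ∫ x in Ioo (0:ℝ) ε, F x := by
        apply mul_le_mul_of_nonneg_left hmono (by positivity)

/-- With `I ε = ∫_0^ε (log(-log x) - log(log 2))^2 dx`, one has
`(1/(4ε))·I(ε) → ∞` as `ε → 0⁺`; in fact for `ε` small,
`√((1/(4ε))·I(ε)) ≥ (1/(2√2))·log(-log ε)`. -/
theorem stmt4 :
    Filter.Tendsto
        (fun ε : ℝ => (1 / (4 * ε)) * ∫ x in Set.Ioo (0:ℝ) ε,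
          (Real.log (-Real.log x) - Real.log (Real.log 2)) ^ 2)
        (nhdsWithin 0 (Set.Ioi 0)) Filter.atTop ∧
    ∃ ε₀ : ℝ, 0 < ε₀ ∧ ∀ ε : ℝ, 0 < ε → ε < ε₀ →
        (1 / (2 * Real.sqrt 2)) * Real.log (-Real.log ε) ≤
          Real.sqrt ((1 / (4 * ε)) * ∫ x in Set.Ioo (0:ℝ) ε,
            (Real.log (-Real.log x) - Real.log (Real.log 2)) ^ 2) := by
  have hFeq : ∀ ε : ℝ, (∫ x in Set.Ioo (0:ℝ) ε,
      (Real.log (-Real.log x) - Real.log (Real.log 2)) ^ 2) = ∫ x in Set.Ioo (0:ℝ) ε, F x :=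
    fun _ => rfl
  constructor
  · have hL : Tendsto (fun ε : ℝ => (1/4) * (Real.log (-Real.log ε))^2)
        (nhdsWithin 0 (Set.Ioi 0)) atTop := by
      have h1 : Tendsto (fun ε : ℝ => -Real.log ε) (nhdsWithin 0 (Set.Ioi 0)) atTop :=
        tendsto_neg_atBot_atTop.comp Real.tendsto_log_nhdsGT_zero
      have h2 : Tendsto (fun ε : ℝ => Real.log (-Real.log ε)) (nhdsWithin 0 (Set.Ioi 0)) atTop :=
        Real.tendsto_log_atTop.comp h1
      have h3 : Tendsto (fun ε : ℝ => (Real.log (-Real.log ε))^2)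
          (nhdsWithin 0 (Set.Ioi 0)) atTop := h2.atTop_mul_atTop₀ h2 |>.congr (fun x => (sq _).symm)
      exact h3.const_mul_atTop (by norm_num)
    apply tendsto_atTop_mono' _ _ hL
    filter_upwards [Ioo_mem_nhdsGT_of_mem (by simp [Real.exp_pos] : (0:ℝ) ∈ Set.Ico 0 (Real.exp (-1)))]
      with ε hε
    rw [hFeq]
    exact key hε.1 hε.2.le
  · refine ⟨Real.exp (-1), Real.exp_pos _, fun ε h0 h1 => ?_⟩
    rw [hFeq]
    have hlε : Real.log ε ≤ -1 := by
      have := Real.log_le_log h0 h1.le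
      rwa [Real.log_exp] at this
    have hLε : 0 ≤ Real.log (-Real.log ε) := Real.log_nonneg (by linarith)
    have hk := key h0 h1.le
    have h2 : Real.sqrt ((1/4) * (Real.log (-Real.log ε))^2) ≤
        Real.sqrt ((1 / (4 * ε)) * ∫ x in Set.Ioo (0:ℝ) ε, F x) := Real.sqrt_le_sqrt hk
    have h3 : Real.sqrt ((1/4) * (Real.log (-Real.log ε))^2) =
        (1/2) * Real.log (-Real.log ε) := by
      rw [Real.sqrt_mul (by norm_num), Real.sqrt_sq hLε,
        show (1:ℝ)/4 = (1/2)^2 by norm_num, Real.sqrt_sq (by norm_num)]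
    have h4 : (1 / (2 * Real.sqrt 2)) * Real.log (-Real.log ε) ≤
        (1/2) * Real.log (-Real.log ε) := by
      apply mul_le_mul_of_nonneg_right _ hLε
      rw [div_le_div_iff₀ (by positivity) (by norm_num)]
      nlinarith [Real.sq_sqrt (by norm_num : (0:ℝ) ≤ 2), Real.sqrt_nonneg 2,
        Real.one_le_sqrt.2 (by norm_num : (1:ℝ) ≤ 2)]
    linarith [h3 ▸ h2]
end

section
/- Let 1 < p < ∞ and 0 ≤ α < p - 1. There exists a constant C = C(α, p) such that for every continuously differentiable function u : [0,1] → ℝ: |u(0)|^p ≤ C·(∫_0^1 x^α |u(x)|^p dx + ∫_0^1 x^α |u'(x)|^p dx). -/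
open MeasureTheory Set

private lemma two_pow_bound {p : ℝ} (hp : 1 ≤ p) {a b : ℝ} (ha : 0 ≤ a) (hb : 0 ≤ b) :
    (a + b) ^ p ≤ 2 ^ (p - 1) * (a ^ p + b ^ p) := by
  have h := NNReal.rpow_add_le_mul_rpow_add_rpow a.toNNReal b.toNNReal hp
  have h2 := (NNReal.coe_le_coe).2 h
  push_cast at h2
  rwa [Real.coe_toNNReal a ha, Real.coe_toNNReal b hb] at h2

/-- One-dimensional Nečas weighted trace inequality: for `1 < p < ∞` and
`0 ≤ α < p - 1`, there is `C = C(α,p)` such that for every `C¹` function `u` on `[0,1]`,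
`|u 0|^p ≤ C (∫_0^1 x^α |u|^p + ∫_0^1 x^α |u'|^p)`. -/
theorem stmt6 (p α : ℝ) (hp : 1 < p) (hα0 : 0 ≤ α) (hα : α < p - 1) :
    ∃ C : ℝ, 0 < C ∧ ∀ u u' : ℝ → ℝ,
      (∀ x ∈ Set.Icc (0:ℝ) 1, HasDerivAt u (u' x) x) →
      ContinuousOn u' (Set.Icc 0 1) →
      |u 0| ^ p ≤ C * ((∫ x in Set.Ioo (0:ℝ) 1, x ^ α * |u x| ^ p) +
        ∫ x in Set.Ioo (0:ℝ) 1, x ^ α * |u' x| ^ p) := by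
  have hp0 : (0:ℝ) < p := by linarith
  have hp1 : (0:ℝ) < p - 1 := by linarith
  set q : ℝ := p / (p - 1) with hq_eq
  have hpq : p.HolderConjugate q := Real.HolderConjugate.conjExponent hp
  have hq1 : 1 < q := hpq.symm.lt
  have hq0 : (0:ℝ) < q := by linarith
  set r : ℝ := -α / (p - 1) with hr_def
  have hr : (-1:ℝ) < r := by
    rw [hr_def, neg_div]
    have : α / (p - 1) < 1 := (div_lt_one hp1).2 hα
    linarith
  set K : ℝ := ∫ t in Ioo (0:ℝ) 1, t ^ r with hK_def
  have hK0 : 0 ≤ K :=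
    setIntegral_nonneg measurableSet_Ioo fun t ht => Real.rpow_nonneg ht.1.le r
  have h2p : (0:ℝ) < 2 ^ (p - 1) := Real.rpow_pos_of_pos two_pos _
  have hKp : (0:ℝ) ≤ K ^ (p - 1) := Real.rpow_nonneg hK0 _
  have ha1 : (0:ℝ) < α + 1 := by linarith
  refine ⟨2 ^ (p - 1) * ((α + 1) + K ^ (p - 1)), by nlinarith, ?_⟩
  intro u u' hderiv hu'c
  have hu_cont : ContinuousOn u (Icc 0 1) := fun x hx =>
    ((hderiv x hx).continuousAt).continuousWithinAt
  have hxa_cont : Continuous fun x : ℝ => x ^ α := Real.continuous_rpow_const hα0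
  have hxa_int : IntegrableOn (fun x : ℝ => x ^ α) (Ioo 0 1) :=
    (hxa_cont.continuousOn.integrableOn_Icc).mono_set Ioo_subset_Icc_self
  have hA_int : IntegrableOn (fun x => x ^ α * |u x| ^ p) (Ioo 0 1) :=
    (((hxa_cont.continuousOn).mul
      ((hu_cont.abs).rpow_const fun x _ => Or.inr hp0.le)).integrableOn_Icc).mono_set
      Ioo_subset_Icc_self
  have hB_int : IntegrableOn (fun x => x ^ α * |u' x| ^ p) (Ioo 0 1) :=
    (((hxa_cont.continuousOn).mul
      ((hu'c.abs).rpow_const fun x _ => Or.inr hp0.le)).integrableOn_Icc).mono_set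
      Ioo_subset_Icc_self
  set A : ℝ := ∫ x in Ioo (0:ℝ) 1, x ^ α * |u x| ^ p with hA_def
  set B : ℝ := ∫ x in Ioo (0:ℝ) 1, x ^ α * |u' x| ^ p with hB_def
  have hA0 : 0 ≤ A := setIntegral_nonneg measurableSet_Ioo fun x hx =>
    mul_nonneg (Real.rpow_nonneg hx.1.le _) (Real.rpow_nonneg (abs_nonneg _) _)
  have hB0 : 0 ≤ B := setIntegral_nonneg measurableSet_Ioo fun x hx =>
    mul_nonneg (Real.rpow_nonneg hx.1.le _) (Real.rpow_nonneg (abs_nonneg _) _)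
  set I : ℝ := ∫ t in Ioo (0:ℝ) 1, |u' t| with hI_def
  have habs_int : IntegrableOn (fun t => |u' t|) (Icc 0 1) := (hu'c.abs).integrableOn_Icc
  have hI0 : 0 ≤ I := setIntegral_nonneg measurableSet_Ioo fun t _ => abs_nonneg _
  -- pointwise FTC bound
  have hpt : ∀ x ∈ Ioo (0:ℝ) 1, |u 0| ≤ |u x| + I := by
    intro x hx
    have hx01 : Icc (0:ℝ) x ⊆ Icc 0 1 := Icc_subset_Icc le_rfl hx.2.le
    have hftc : ∫ t in (0:ℝ)..x, u' t = u x - u 0 := by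
      apply intervalIntegral.integral_eq_sub_of_hasDerivAt
      · intro t ht
        rw [uIcc_of_le hx.1.le] at ht
        exact hderiv t (hx01 ht)
      · apply ContinuousOn.intervalIntegrable
        rw [uIcc_of_le hx.1.le]
        exact hu'c.mono hx01
    have h1 : |∫ t in (0:ℝ)..x, u' t| ≤ ∫ t in (0:ℝ)..x, |u' t| :=
      intervalIntegral.abs_integral_le_integral_abs hx.1.le
    have h2 : ∫ t in (0:ℝ)..x, |u' t| ≤ I := by
      rw [intervalIntegral.integral_of_le hx.1.le, integral_Ioc_eq_integral_Ioo]
      apply setIntegral_mono_set (habs_int.mono_set Ioo_subset_Icc_self)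
      · exact Filter.Eventually.of_forall fun t => abs_nonneg _
      · exact HasSubset.Subset.eventuallyLE (Ioo_subset_Ioo le_rfl hx.2.le)
    have h0 : u 0 = u x - ∫ t in (0:ℝ)..x, u' t := by rw [hftc]; ring
    rw [h0, sub_eq_add_neg]
    refine (abs_add_le _ _).trans ?_
    rw [abs_neg]
    linarith
  -- Hölder inequality
  haveI : IsFiniteMeasure (volume.restrict (Ioo (0:ℝ) 1)) := by
    constructor
    rw [Measure.restrict_apply_univ]
    simp [Real.volume_Ioo]
  have holder : I ≤ B ^ (1/p) * K ^ (1/q) := by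
    set f : ℝ → ℝ := fun t => t ^ (α / p) * |u' t| with hf_def
    set g : ℝ → ℝ := fun t => t ^ (-(α / p)) with hg_def
    have hf_cont : ContinuousOn f (Icc 0 1) :=
      ((Real.continuous_rpow_const (by positivity)).continuousOn).mul (hu'c.abs)
    have hf_meas : AEStronglyMeasurable f (volume.restrict (Ioo 0 1)) :=
      (hf_cont.mono Ioo_subset_Icc_self).aestronglyMeasurable measurableSet_Ioo
    obtain ⟨M, hM⟩ := isCompact_Icc.exists_bound_of_continuousOn hf_cont
    have hf_mem : MemLp f (ENNReal.ofReal p) (volume.restrict (Ioo 0 1)) :=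
      MemLp.of_bound hf_meas M <| by
        filter_upwards [ae_restrict_mem measurableSet_Ioo] with t ht
        exact hM t (Ioo_subset_Icc_self ht)
    have hg_meas : AEStronglyMeasurable g (volume.restrict (Ioo 0 1)) := by
      apply ContinuousOn.aestronglyMeasurable _ measurableSet_Ioo
      intro t ht
      exact (Real.continuousAt_rpow_const t _ (Or.inl (ne_of_gt ht.1))).continuousWithinAt
    have hgq_int : IntegrableOn (fun t : ℝ => t ^ r) (Ioo (0:ℝ) 1) := by
      have h := intervalIntegral.intervalIntegrable_rpow' (a := 0) (b := 1) hr
      rwa [intervalIntegrable_iff_integrableOn_Ioo_of_le zero_le_one] at h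
    have hq_ne : ENNReal.ofReal q ≠ 0 := by
      simp only [ne_eq, ENNReal.ofReal_eq_zero, not_le]
      exact hq0
    have hexp : -(α / p) * q = r := by
      rw [hq_eq, hr_def]
      field_simp
    have hg_mem : MemLp g (ENNReal.ofReal q) (volume.restrict (Ioo 0 1)) := by
      have hiff := memLp_norm_rpow_iff (μ := volume.restrict (Ioo (0:ℝ) 1))
        (p := ENNReal.ofReal q) hg_meas hq_ne ENNReal.ofReal_ne_top
      rw [ENNReal.div_self hq_ne ENNReal.ofReal_ne_top, ENNReal.toReal_ofReal hq0.le,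
        memLp_one_iff_integrable] at hiff
      apply hiff.mp
      apply hgq_int.congr
      filter_upwards [ae_restrict_mem measurableSet_Ioo] with t ht
      show t ^ r = ‖g t‖ ^ q
      rw [hg_def]
      simp only
      rw [Real.norm_of_nonneg (Real.rpow_nonneg ht.1.le _), ← Real.rpow_mul ht.1.le, hexp]
    have hfg := integral_mul_le_Lp_mul_Lq_of_nonneg hpq
      (f := f) (g := g) (μ := volume.restrict (Ioo (0:ℝ) 1))
      (by filter_upwards [ae_restrict_mem measurableSet_Ioo] with t ht
          exact mul_nonneg (Real.rpow_nonneg ht.1.le _) (abs_nonneg _))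
      (by filter_upwards [ae_restrict_mem measurableSet_Ioo] with t ht
          exact Real.rpow_nonneg ht.1.le _)
      hf_mem hg_mem
    have e1 : ∫ t in Ioo (0:ℝ) 1, f t * g t = I := by
      apply setIntegral_congr_fun measurableSet_Ioo
      intro t ht
      simp only [hf_def, hg_def]
      rw [mul_right_comm, ← Real.rpow_add ht.1]
      simp
    have e2 : ∫ t in Ioo (0:ℝ) 1, f t ^ p = B := by
      apply setIntegral_congr_fun measurableSet_Ioo
      intro t ht
      simp only [hf_def]
      rw [Real.mul_rpow (Real.rpow_nonneg ht.1.le _) (abs_nonneg _),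
        ← Real.rpow_mul ht.1.le, div_mul_cancel₀ _ hp0.ne']
    have e3 : ∫ t in Ioo (0:ℝ) 1, g t ^ q = K := by
      apply setIntegral_congr_fun measurableSet_Ioo
      intro t ht
      simp only [hg_def]
      rw [← Real.rpow_mul ht.1.le, hexp]
    rw [e1, e2, e3] at hfg
    exact hfg
  have hIp : I ^ p ≤ K ^ (p - 1) * B := by
    have h1 : I ^ p ≤ (B ^ (1/p) * K ^ (1/q)) ^ p := Real.rpow_le_rpow hI0 holder hp0.le
    rw [Real.mul_rpow (Real.rpow_nonneg hB0 _) (Real.rpow_nonneg hK0 _),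
      ← Real.rpow_mul hB0, ← Real.rpow_mul hK0, one_div_mul_cancel hp0.ne',
      Real.rpow_one] at h1
    have hpq' : 1 / q * p = p - 1 := by
      rw [hq_eq]
      field_simp
    rw [hpq'] at h1
    linarith [h1]
  -- the weight integral
  have hW : ∫ x in Ioo (0:ℝ) 1, x ^ α = 1 / (α + 1) := by
    rw [← integral_Ioc_eq_integral_Ioo, ← intervalIntegral.integral_of_le zero_le_one,
      integral_rpow (Or.inl (by linarith : (-1:ℝ) < α))]
    rw [Real.one_rpow, Real.zero_rpow (by linarith : α + 1 ≠ 0)]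
    ring
  -- integrate the pointwise bound
  have key : ∫ x in Ioo (0:ℝ) 1, x ^ α * |u 0| ^ p ≤
      ∫ x in Ioo (0:ℝ) 1,
        (2 ^ (p-1) * (x ^ α * |u x| ^ p) + (2 ^ (p-1) * I ^ p) * x ^ α) := by
    apply setIntegral_mono_on
    · exact hxa_int.mul_const _
    · exact (hA_int.const_mul _).add (hxa_int.const_mul _)
    · exact measurableSet_Ioo
    · intro x hx
      have h1 : |u 0| ^ p ≤ 2 ^ (p-1) * (|u x| ^ p + I ^ p) :=
        le_trans (Real.rpow_le_rpow (abs_nonneg _) (hpt x hx) hp0.le)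
          (two_pow_bound hp.le (abs_nonneg _) hI0)
      have hxag : (0:ℝ) ≤ x ^ α := Real.rpow_nonneg hx.1.le _
      nlinarith [mul_le_mul_of_nonneg_left h1 hxag]
  have lhs_eq : ∫ x in Ioo (0:ℝ) 1, x ^ α * |u 0| ^ p = (1 / (α + 1)) * |u 0| ^ p := by
    rw [show (fun x : ℝ => x ^ α * |u 0| ^ p) = fun x : ℝ => |u 0| ^ p * x ^ α from
      funext fun x => mul_comm _ _]
    rw [MeasureTheory.integral_const_mul, hW]
    ring
  have rhs_eq : ∫ x in Ioo (0:ℝ) 1,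
      (2 ^ (p-1) * (x ^ α * |u x| ^ p) + (2 ^ (p-1) * I ^ p) * x ^ α)
      = 2 ^ (p-1) * A + (2 ^ (p-1) * I ^ p) * (1 / (α + 1)) := by
    rw [integral_add (hA_int.const_mul _) (hxa_int.const_mul _),
      MeasureTheory.integral_const_mul, MeasureTheory.integral_const_mul, hW, hA_def]
  rw [lhs_eq, rhs_eq] at key
  have hinv : (α + 1) * (1 / (α + 1)) = 1 := mul_one_div_cancel ha1.ne'
  have key2 : |u 0| ^ p ≤ (α + 1) * (2 ^ (p-1) * A) + 2 ^ (p-1) * I ^ p :=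
    calc |u 0| ^ p = (α + 1) * ((1 / (α + 1)) * |u 0| ^ p) := by
          rw [← mul_assoc, hinv, one_mul]
      _ ≤ (α + 1) * (2 ^ (p-1) * A + (2 ^ (p-1) * I ^ p) * (1 / (α + 1))) :=
          mul_le_mul_of_nonneg_left key ha1.le
      _ = (α + 1) * (2 ^ (p-1) * A) + ((α + 1) * (1 / (α + 1))) * (2 ^ (p-1) * I ^ p) := by
          ring
      _ = (α + 1) * (2 ^ (p-1) * A) + 2 ^ (p-1) * I ^ p := by rw [hinv]; ring
  have h3 : 2 ^ (p-1) * I ^ p ≤ 2 ^ (p-1) * (K ^ (p-1) * B) :=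
    mul_le_mul_of_nonneg_left hIp h2p.le
  nlinarith [key2, h3, mul_nonneg (mul_nonneg h2p.le hKp) hA0,
    mul_nonneg (mul_nonneg h2p.le ha1.le) hB0]
end

section
/- Let 1/2 < α < 1 and q ≥ 1 with q < 2/(1+α). With S and z as above (the sector of opening π/α > π and z(r,θ) = (r^{-α} - r^α) sin(αθ)), both ∫_S |z|^q dx dy and ∫_S |∇z|^q dx dy are finite. Consequently there exists a nonzero function in W^{1,q}(S) which is harmonic in S and vanishes on ∂S whenever q < 2/(1+α). -/
open MeasureTheory Set

private lemma stmt16_aux_int (e L : ℝ) (hL : 0 < L) (he : -1 < e) :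
    IntegrableOn (fun p : ℝ × ℝ => p.1 ^ e) (Ioo 0 1 ×ˢ Ioo 0 L) volume := by
  have h1 : IntegrableOn (fun x : ℝ => x ^ e) (Ioo 0 1) volume :=
    (intervalIntegral.integrableOn_Ioo_rpow_iff one_pos).2 he
  have h2 : IntegrableOn (fun _ : ℝ => (1:ℝ)) (Ioo 0 L) volume :=
    integrableOn_const (by simp [Real.volume_Ioo])
  have := h1.mul_prod h2
  rw [Measure.prod_restrict] at this
  simpa [IntegrableOn, Measure.volume_eq_prod] using this

private lemma stmt16_aux_dom (e L : ℝ) (hL : 0 < L) (he : -1 < e) (C : ℝ) (f : ℝ × ℝ → ℝ)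
    (hf : Measurable f)
    (hb : ∀ p ∈ Ioo (0:ℝ) 1 ×ˢ Ioo (0:ℝ) L, |f p| ≤ C * p.1 ^ e) :
    IntegrableOn f (Ioo 0 1 ×ˢ Ioo 0 L) volume := by
  have hS : MeasurableSet (Ioo (0:ℝ) 1 ×ˢ Ioo (0:ℝ) L) :=
    measurableSet_Ioo.prod measurableSet_Ioo
  have hg : IntegrableOn (fun p : ℝ × ℝ => C * p.1 ^ e) (Ioo 0 1 ×ˢ Ioo 0 L) volume :=
    (stmt16_aux_int e L hL he).const_mul C
  refine Integrable.mono' hg hf.aestronglyMeasurable.restrict ?_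
  rw [ae_restrict_iff' hS]
  exact Filter.Eventually.of_forall fun p hp => by
    simpa [Real.norm_eq_abs] using hb p hp

private lemma stmt16_hderiv1 (α c : ℝ) {x : ℝ} (hx : 0 < x) :
    HasDerivAt (fun s : ℝ => (s ^ (-α) - s ^ α) * c)
      ((-α * x ^ (-α - 1) - α * x ^ (α - 1)) * c) x := by
  have h1 : HasDerivAt (fun s : ℝ => s ^ (-α)) (-α * x ^ (-α - 1)) x :=
    Real.hasDerivAt_rpow_const (Or.inl hx.ne')
  have h2 : HasDerivAt (fun s : ℝ => s ^ α) (α * x ^ (α - 1)) x :=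
    Real.hasDerivAt_rpow_const (Or.inl hx.ne')
  exact (h1.sub h2).mul_const c

private lemma stmt16_hderiv1' (α c : ℝ) {x : ℝ} (hx : 0 < x) :
    HasDerivAt (fun s : ℝ => (-α * s ^ (-α - 1) - α * s ^ (α - 1)) * c)
      ((-α * ((-α - 1) * x ^ (-α - 1 - 1)) - α * ((α - 1) * x ^ (α - 1 - 1))) * c) x := by
  have h1 : HasDerivAt (fun s : ℝ => s ^ (-α - 1)) ((-α - 1) * x ^ (-α - 1 - 1)) x :=
    Real.hasDerivAt_rpow_const (Or.inl hx.ne')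
  have h2 : HasDerivAt (fun s : ℝ => s ^ (α - 1)) ((α - 1) * x ^ (α - 1 - 1)) x :=
    Real.hasDerivAt_rpow_const (Or.inl hx.ne')
  exact ((h1.const_mul (-α)).sub (h2.const_mul α)).mul_const c

private lemma stmt16_hderiv2 (α C θ : ℝ) :
    HasDerivAt (fun t : ℝ => C * Real.sin (α * t)) (C * (Real.cos (α * θ) * α)) θ := by
  have h0 : HasDerivAt (fun t : ℝ => α * t) α θ := by
    simpa using (hasDerivAt_id θ).const_mul α
  exact ((Real.hasDerivAt_sin (α * θ)).comp θ h0).const_mul C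

private lemma stmt16_hderiv2' (α C θ : ℝ) :
    HasDerivAt (fun t : ℝ => C * (Real.cos (α * t) * α)) (C * (-Real.sin (α * θ) * α * α)) θ := by
  have h0 : HasDerivAt (fun t : ℝ => α * t) α θ := by
    simpa using (hasDerivAt_id θ).const_mul α
  have := (((Real.hasDerivAt_cos (α * θ)).comp θ h0).mul_const α).const_mul C
  simpa [mul_assoc] using this

/-- For `1/2 < α < 1` and `1 ≤ q < 2/(1+α)`, the singular harmonic function
`z(r,θ) = (r^{-α} - r^α) sin(αθ)` on the sector of opening `π/α` satisfies
`∫_S |z|^q < ∞` and `∫_S |∇z|^q < ∞` (written in polar coordinates, with area element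
`r dr dθ` and `|∇z|² = z_r² + (1/r²) z_θ²`).  Consequently there is a nonzero harmonic
function on the sector, vanishing on the boundary, with these `W^{1,q}` integrability
properties. -/
theorem stmt16 (α q : ℝ) (hα : 1/2 < α) (hα1 : α < 1) (hq1 : 1 ≤ q)
    (hq : q < 2 / (1 + α)) :
    MeasureTheory.IntegrableOn
        (fun p : ℝ × ℝ => |(p.1 ^ (-α) - p.1 ^ α) * Real.sin (α * p.2)| ^ q * p.1)
        (Set.Ioo 0 1 ×ˢ Set.Ioo 0 (Real.pi / α)) MeasureTheory.volume ∧
      MeasureTheory.IntegrableOn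
        (fun p : ℝ × ℝ =>
          (Real.sqrt
              ((deriv (fun s : ℝ => (s ^ (-α) - s ^ α) * Real.sin (α * p.2)) p.1) ^ 2 +
                (1 / p.1 ^ 2) *
                  (deriv (fun t : ℝ => (p.1 ^ (-α) - p.1 ^ α) * Real.sin (α * t)) p.2) ^ 2)) ^ q
            * p.1)
        (Set.Ioo 0 1 ×ˢ Set.Ioo 0 (Real.pi / α)) MeasureTheory.volume ∧
      ∃ v : ℝ → ℝ → ℝ,
        (∃ r ∈ Set.Ioo (0:ℝ) 1, ∃ θ ∈ Set.Ioo (0:ℝ) (Real.pi / α), v r θ ≠ 0) ∧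
        (∀ r ∈ Set.Ioo (0:ℝ) 1, ∀ θ ∈ Set.Ioo (0:ℝ) (Real.pi / α),
            deriv (deriv (fun s => v s θ)) r + (1 / r) * deriv (fun s => v s θ) r +
              (1 / r ^ 2) * deriv (deriv (fun t => v r t)) θ = 0) ∧
        (∀ r ∈ Set.Ioc (0:ℝ) 1, v r 0 = 0 ∧ v r (Real.pi / α) = 0) ∧
        (∀ θ ∈ Set.Icc (0:ℝ) (Real.pi / α), v 1 θ = 0) ∧
        MeasureTheory.IntegrableOn (fun p : ℝ × ℝ => |v p.1 p.2| ^ q * p.1)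
          (Set.Ioo 0 1 ×ˢ Set.Ioo 0 (Real.pi / α)) MeasureTheory.volume ∧
        MeasureTheory.IntegrableOn
          (fun p : ℝ × ℝ =>
            (Real.sqrt ((deriv (fun s => v s p.2) p.1) ^ 2 +
                (1 / p.1 ^ 2) * (deriv (fun t => v p.1 t) p.2) ^ 2)) ^ q * p.1)
          (Set.Ioo 0 1 ×ˢ Set.Ioo 0 (Real.pi / α)) MeasureTheory.volume := by
  have hα0 : (0:ℝ) < α := by linarith
  have hL : 0 < Real.pi / α := div_pos Real.pi_pos hα0
  have hq0 : (0:ℝ) ≤ q := by linarith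
  have hq2 : q * (1 + α) < 2 := (lt_div_iff₀ (by linarith)).1 hq
  set L := Real.pi / α with hLdef
  -- the set is measurable
  have hS : MeasurableSet (Ioo (0:ℝ) 1 ×ˢ Ioo (0:ℝ) L) :=
    measurableSet_Ioo.prod measurableSet_Ioo
  -- first integrability
  have int1 : IntegrableOn
      (fun p : ℝ × ℝ => |(p.1 ^ (-α) - p.1 ^ α) * Real.sin (α * p.2)| ^ q * p.1)
      (Ioo 0 1 ×ˢ Ioo 0 L) volume := by
    refine stmt16_aux_dom (-α * q + 1) L hL (by nlinarith) 1 _ (by fun_prop) ?_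
    rintro ⟨r, θ⟩ ⟨hr, hθ⟩
    dsimp only at hr hθ ⊢
    have hr0 : (0:ℝ) < r := hr.1
    have hBA : r ^ α ≤ r ^ (-α) :=
      Real.rpow_le_rpow_of_exponent_ge hr0 hr.2.le (by linarith)
    have hB : (0:ℝ) ≤ r ^ α := Real.rpow_nonneg hr0.le α
    have hbase : |(r ^ (-α) - r ^ α) * Real.sin (α * θ)| ≤ r ^ (-α) := by
      rw [abs_mul]
      calc |r ^ (-α) - r ^ α| * |Real.sin (α * θ)| ≤ |r ^ (-α) - r ^ α| * 1 :=
            mul_le_mul_of_nonneg_left (Real.abs_sin_le_one _) (abs_nonneg _)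
        _ = |r ^ (-α) - r ^ α| := mul_one _
        _ ≤ r ^ (-α) := by rw [abs_of_nonneg (by linarith)]; linarith
    have h1 : |(r ^ (-α) - r ^ α) * Real.sin (α * θ)| ^ q ≤ r ^ (-α * q) := by
      calc |(r ^ (-α) - r ^ α) * Real.sin (α * θ)| ^ q ≤ (r ^ (-α)) ^ q :=
            Real.rpow_le_rpow (abs_nonneg _) hbase hq0
        _ = r ^ (-α * q) := (Real.rpow_mul hr0.le _ _).symm
    have hnn : (0:ℝ) ≤ |(r ^ (-α) - r ^ α) * Real.sin (α * θ)| ^ q * r :=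
      mul_nonneg (Real.rpow_nonneg (abs_nonneg _) q) hr0.le
    rw [abs_of_nonneg hnn, one_mul, Real.rpow_add_one hr0.ne']
    exact mul_le_mul_of_nonneg_right h1 hr0.le
  -- explicit form of the gradient integrand
  have heqon : EqOn
      (fun p : ℝ × ℝ =>
        (Real.sqrt (((-α * p.1 ^ (-α - 1) - α * p.1 ^ (α - 1)) * Real.sin (α * p.2)) ^ 2 +
          (1 / p.1 ^ 2) * ((p.1 ^ (-α) - p.1 ^ α) * (Real.cos (α * p.2) * α)) ^ 2)) ^ q * p.1)
      (fun p : ℝ × ℝ =>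
        (Real.sqrt
            ((deriv (fun s : ℝ => (s ^ (-α) - s ^ α) * Real.sin (α * p.2)) p.1) ^ 2 +
              (1 / p.1 ^ 2) *
                (deriv (fun t : ℝ => (p.1 ^ (-α) - p.1 ^ α) * Real.sin (α * t)) p.2) ^ 2)) ^ q
          * p.1)
      (Ioo 0 1 ×ˢ Ioo 0 L) := by
    rintro ⟨r, θ⟩ ⟨hr, hθ⟩
    have hr0 : (0:ℝ) < r := hr.1
    simp only
    rw [(stmt16_hderiv1 α (Real.sin (α * θ)) hr0).deriv,
      (stmt16_hderiv2 α (r ^ (-α) - r ^ α) θ).deriv]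
  -- second integrability
  have int2 : IntegrableOn
      (fun p : ℝ × ℝ =>
        (Real.sqrt
            ((deriv (fun s : ℝ => (s ^ (-α) - s ^ α) * Real.sin (α * p.2)) p.1) ^ 2 +
              (1 / p.1 ^ 2) *
                (deriv (fun t : ℝ => (p.1 ^ (-α) - p.1 ^ α) * Real.sin (α * t)) p.2) ^ 2)) ^ q
          * p.1)
      (Ioo 0 1 ×ˢ Ioo 0 L) volume := by
    refine IntegrableOn.congr_fun ?_ heqon hS
    refine stmt16_aux_dom ((-α - 1) * q + 1) L hL (by nlinarith) (3 ^ q) _ (by fun_prop) ?_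
    rintro ⟨r, θ⟩ ⟨hr, hθ⟩
    dsimp only at hr hθ ⊢
    have hr0 : (0:ℝ) < r := hr.1
    set X := r ^ (-α - 1) with hXdef
    have hX : 0 < X := Real.rpow_pos_of_pos hr0 _
    have hYX : r ^ (α - 1) ≤ X :=
      Real.rpow_le_rpow_of_exponent_ge hr0 hr.2.le (by linarith)
    have hY : (0:ℝ) ≤ r ^ (α - 1) := Real.rpow_nonneg hr0.le _
    have hBA : r ^ α ≤ r ^ (-α) :=
      Real.rpow_le_rpow_of_exponent_ge hr0 hr.2.le (by linarith)
    have hB : (0:ℝ) ≤ r ^ α := Real.rpow_nonneg hr0.le α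
    -- bound term 1
    have habs1 : |(-α * r ^ (-α - 1) - α * r ^ (α - 1)) * Real.sin (α * θ)| ≤ 2 * X := by
      rw [abs_mul]
      have h1 : |(-α * r ^ (-α - 1) - α * r ^ (α - 1))| = α * r ^ (-α - 1) + α * r ^ (α - 1) := by
        rw [show -α * r ^ (-α - 1) - α * r ^ (α - 1) = -(α * r ^ (-α - 1) + α * r ^ (α - 1)) by ring,
          abs_neg, abs_of_nonneg (by positivity)]
      rw [h1]
      calc (α * r ^ (-α - 1) + α * r ^ (α - 1)) * |Real.sin (α * θ)|
          ≤ (α * r ^ (-α - 1) + α * r ^ (α - 1)) * 1 :=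
            mul_le_mul_of_nonneg_left (Real.abs_sin_le_one _) (by positivity)
        _ ≤ 2 * X := by rw [mul_one, ← hXdef]; nlinarith
    have ht1 : ((-α * r ^ (-α - 1) - α * r ^ (α - 1)) * Real.sin (α * θ)) ^ 2 ≤ (2 * X) ^ 2 := by
      rw [← sq_abs]
      exact pow_le_pow_left₀ (abs_nonneg _) habs1 2
    -- bound term 2
    have habs2 : |(r ^ (-α) - r ^ α) * (Real.cos (α * θ) * α)| ≤ r ^ (-α) := by
      rw [abs_mul]
      have h2 : |Real.cos (α * θ) * α| ≤ 1 := by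
        rw [abs_mul, abs_of_pos hα0]
        have hc := Real.abs_cos_le_one (α * θ)
        have hc0 := abs_nonneg (Real.cos (α * θ))
        nlinarith
      calc |r ^ (-α) - r ^ α| * |Real.cos (α * θ) * α| ≤ |r ^ (-α) - r ^ α| * 1 :=
            mul_le_mul_of_nonneg_left h2 (abs_nonneg _)
        _ = |r ^ (-α) - r ^ α| := mul_one _
        _ ≤ r ^ (-α) := by rw [abs_of_nonneg (by linarith)]; linarith
    have ht2 : ((r ^ (-α) - r ^ α) * (Real.cos (α * θ) * α)) ^ 2 ≤ (r ^ (-α)) ^ 2 := by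
      rw [← sq_abs]
      exact pow_le_pow_left₀ (abs_nonneg _) habs2 2
    -- identity: (1/r^2) * (r^(-α))^2 = X^2
    have hid : (1 / r ^ 2) * (r ^ (-α)) ^ 2 = X ^ 2 := by
      have e1 : X = r ^ (-α) / r := by
        rw [hXdef, show -α - 1 = -α + (-1) by ring, Real.rpow_add hr0, Real.rpow_neg_one]; ring
      rw [e1]; field_simp
    -- sqrt bound
    have hsum : ((-α * r ^ (-α - 1) - α * r ^ (α - 1)) * Real.sin (α * θ)) ^ 2 +
        (1 / r ^ 2) * ((r ^ (-α) - r ^ α) * (Real.cos (α * θ) * α)) ^ 2 ≤ (3 * X) ^ 2 := by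
      have h3 : (1 / r ^ 2) * ((r ^ (-α) - r ^ α) * (Real.cos (α * θ) * α)) ^ 2
          ≤ (1 / r ^ 2) * (r ^ (-α)) ^ 2 :=
        mul_le_mul_of_nonneg_left ht2 (by positivity)
      rw [hid] at h3
      nlinarith
    have hsqrt : Real.sqrt (((-α * r ^ (-α - 1) - α * r ^ (α - 1)) * Real.sin (α * θ)) ^ 2 +
        (1 / r ^ 2) * ((r ^ (-α) - r ^ α) * (Real.cos (α * θ) * α)) ^ 2) ≤ 3 * X := by
      calc Real.sqrt _ ≤ Real.sqrt ((3 * X) ^ 2) := Real.sqrt_le_sqrt hsum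
        _ = 3 * X := Real.sqrt_sq (by positivity)
    have hpow : (Real.sqrt (((-α * r ^ (-α - 1) - α * r ^ (α - 1)) * Real.sin (α * θ)) ^ 2 +
        (1 / r ^ 2) * ((r ^ (-α) - r ^ α) * (Real.cos (α * θ) * α)) ^ 2)) ^ q
        ≤ 3 ^ q * r ^ ((-α - 1) * q) := by
      calc (Real.sqrt _) ^ q ≤ (3 * X) ^ q :=
            Real.rpow_le_rpow (Real.sqrt_nonneg _) hsqrt hq0
        _ = 3 ^ q * X ^ q := Real.mul_rpow (by norm_num) hX.le
        _ = 3 ^ q * r ^ ((-α - 1) * q) := by rw [hXdef, ← Real.rpow_mul hr0.le]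
    have hnn : (0:ℝ) ≤ (Real.sqrt (((-α * r ^ (-α - 1) - α * r ^ (α - 1)) * Real.sin (α * θ)) ^ 2 +
        (1 / r ^ 2) * ((r ^ (-α) - r ^ α) * (Real.cos (α * θ) * α)) ^ 2)) ^ q * r :=
      mul_nonneg (Real.rpow_nonneg (Real.sqrt_nonneg _) q) hr0.le
    rw [abs_of_nonneg hnn]
    calc (Real.sqrt (((-α * r ^ (-α - 1) - α * r ^ (α - 1)) * Real.sin (α * θ)) ^ 2 +
          (1 / r ^ 2) * ((r ^ (-α) - r ^ α) * (Real.cos (α * θ) * α)) ^ 2)) ^ q * r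
        ≤ (3 ^ q * r ^ ((-α - 1) * q)) * r := mul_le_mul_of_nonneg_right hpow hr0.le
      _ = 3 ^ q * r ^ ((-α - 1) * q + 1) := by
          rw [Real.rpow_add_one hr0.ne', mul_assoc]
  refine ⟨int1, int2, fun r θ => (r ^ (-α) - r ^ α) * Real.sin (α * θ), ?_, ?_, ?_, ?_, int1, int2⟩
  · -- nonzero at (1/2, π/(2α))
    refine ⟨1/2, by norm_num, Real.pi / (2 * α), ⟨by positivity, ?_⟩, ?_⟩
    · rw [hLdef, div_lt_div_iff₀ (by linarith) hα0]
      nlinarith [Real.pi_pos]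
    · have harg : α * (Real.pi / (2 * α)) = Real.pi / 2 := by field_simp
      dsimp only
      rw [harg, Real.sin_pi_div_two, mul_one]
      have : ((1:ℝ)/2) ^ α < ((1:ℝ)/2) ^ (-α) :=
        Real.rpow_lt_rpow_of_exponent_gt (by norm_num) (by norm_num) (by linarith)
      exact ne_of_gt (by linarith)
  · -- harmonicity
    intro r hr θ hθ
    have hr0 : (0:ℝ) < r := hr.1
    have hdr1 : deriv (fun s : ℝ => (s ^ (-α) - s ^ α) * Real.sin (α * θ)) r
        = (-α * r ^ (-α - 1) - α * r ^ (α - 1)) * Real.sin (α * θ) :=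
      (stmt16_hderiv1 α _ hr0).deriv
    have heq : deriv (fun s : ℝ => (s ^ (-α) - s ^ α) * Real.sin (α * θ))
        =ᶠ[nhds r] fun s => (-α * s ^ (-α - 1) - α * s ^ (α - 1)) * Real.sin (α * θ) := by
      filter_upwards [Ioi_mem_nhds hr0] with s hs
      exact (stmt16_hderiv1 α _ hs).deriv
    have hdr2 : deriv (deriv (fun s : ℝ => (s ^ (-α) - s ^ α) * Real.sin (α * θ))) r
        = (-α * ((-α - 1) * r ^ (-α - 1 - 1)) - α * ((α - 1) * r ^ (α - 1 - 1))) *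
            Real.sin (α * θ) := by
      rw [heq.deriv_eq]
      exact (stmt16_hderiv1' α _ hr0).deriv
    have hdθ1 : deriv (fun t : ℝ => (r ^ (-α) - r ^ α) * Real.sin (α * t))
        = fun t => (r ^ (-α) - r ^ α) * (Real.cos (α * t) * α) :=
      funext fun t => (stmt16_hderiv2 α _ t).deriv
    have hdθ2 : deriv (deriv (fun t : ℝ => (r ^ (-α) - r ^ α) * Real.sin (α * t))) θ
        = (r ^ (-α) - r ^ α) * (-Real.sin (α * θ) * α * α) := by
      rw [hdθ1]; exact (stmt16_hderiv2' α _ θ).deriv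
    simp only [hdr1, hdr2, hdθ2]
    have e1 : r ^ (-α - 1) = r ^ (-α) / r := by
      rw [show -α - 1 = -α + (-1) by ring, Real.rpow_add hr0, Real.rpow_neg_one]; ring
    have e2 : r ^ (α - 1) = r ^ α / r := by
      rw [show α - 1 = α + (-1) by ring, Real.rpow_add hr0, Real.rpow_neg_one]; ring
    have em2 : r ^ ((-2):ℝ) = (r ^ (2:ℕ))⁻¹ := by
      rw [Real.rpow_neg hr0.le]; norm_num
    have e3 : r ^ (-α - 1 - 1) = r ^ (-α) / r ^ 2 := by
      rw [show -α - 1 - 1 = -α + (-2) by ring, Real.rpow_add hr0, em2]; ring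
    have e4 : r ^ (α - 1 - 1) = r ^ α / r ^ 2 := by
      rw [show α - 1 - 1 = α + (-2) by ring, Real.rpow_add hr0, em2]; ring
    rw [e1, e2, e3, e4]
    field_simp
    ring
  · -- boundary: θ = 0 and θ = π/α
    intro r hr
    constructor
    · simp
    · dsimp only
      rw [hLdef, show α * (Real.pi / α) = Real.pi by field_simp, Real.sin_pi, mul_zero]
  · -- boundary: r = 1
    intro θ hθ
    simp [Real.one_rpow]
end
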